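/- arXiv:1011.4810 — 7 statements merged into one kernel-verified Lean document; each statement's English description precedes it below -/
import Mathlib

section
/- Let k > 0. The function u(t,x) = (1 + k·exp(−(5/6)t + x/√6))^(−2) satisfies the Fisher equation ∂ₜu(t,x) = ∂ₓₓu(t,x) + u(t,x)(1 − u(t,x)) for all t ∈ ℝ and x ∈ ℝ, and satisfies the initial condition u(0,x) = (1 + k·exp(x/√6))^(−2). -/
/-! Writing `z = -(5/6) t + x/√6`, the function `u` is the travelling wave `φ(z)` with profile
`φ(z) = (1 + k eᶻ)⁻²`, and the Fisher equation for `u` reduces to the profile equation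
`-(5/6) φ' = φ''/6 + φ(1 - φ)`. With `g = 1 + k eᶻ` one has `g' = g - 1`, so
`φ' = -2 (g - 1)/g³` and `φ'' = 6 (g - 1)²/g⁴ - 2 (g - 1)/g³`; multiplied by `g⁴`, the
profile equation becomes the polynomial identity
`(g - 1)² - 2 g (g - 1) + g² - 1 = 0`. -/

open Real

theorem HasDerivAt.comp_mul_add {φ : ℝ → ℝ} {φ' c d y : ℝ}
    (hφ : HasDerivAt φ φ' (c * y + d)) :
    HasDerivAt (fun y => φ (c * y + d)) (φ' * c) y :=
  hφ.comp y (by simpa using ((hasDerivAt_id y).const_mul c).add_const d)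

theorem travelingWave_solves_reactionDiffusion {φ φ' φ'' f : ℝ → ℝ} {a b : ℝ}
    (hφ : ∀ z, HasDerivAt φ (φ' z) z) (hφ' : ∀ z, HasDerivAt φ' (φ'' z) z)
    (hode : ∀ z, a * φ' z = b ^ 2 * φ'' z + f (φ z)) (t x : ℝ) :
    deriv (fun s => φ (a * s + b * x)) t
      = deriv (deriv fun y => φ (a * t + b * y)) x + f (φ (a * t + b * x)) := by
  simp only [add_comm (a * t)]
  have hspace : deriv (fun y => φ (b * y + a * t)) = fun y => φ' (b * y + a * t) * b :=
    funext fun y => (hφ _).comp_mul_add.deriv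
  rw [(hφ _).comp_mul_add.deriv, hspace, ((hφ' _).comp_mul_add.mul_const b).deriv,
    add_comm (b * x)]
  linear_combination hode (a * t + b * x)

noncomputable def fisherProfile (k z : ℝ) : ℝ := ((1 + k * exp z) ^ 2)⁻¹

theorem hasDerivAt_fisherProfile {k : ℝ} (hk : 0 ≤ k) (z : ℝ) :
    HasDerivAt (fisherProfile k) (-2 * k * exp z / (1 + k * exp z) ^ 3) z := by
  have hg : 1 + k * exp z ≠ 0 := by positivity
  refine ((((hasDerivAt_exp z).const_mul k).const_add 1).pow 2 |>.inv
    (pow_ne_zero 2 hg)).congr_deriv ?_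
  simp only [Pi.pow_apply]
  field_simp
  ring

theorem hasDerivAt_fisherProfile_deriv {k : ℝ} (hk : 0 ≤ k) (z : ℝ) :
    HasDerivAt (fun z => -2 * k * exp z / (1 + k * exp z) ^ 3)
      (6 * k ^ 2 * exp z ^ 2 / (1 + k * exp z) ^ 4 - 2 * k * exp z / (1 + k * exp z) ^ 3) z := by
  have hg : 1 + k * exp z ≠ 0 := by positivity
  refine (((hasDerivAt_exp z).const_mul (-2 * k)).div
    ((((hasDerivAt_exp z).const_mul k).const_add 1).pow 3) (pow_ne_zero 3 hg)).congr_deriv ?_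
  simp only [Pi.pow_apply]
  field_simp
  ring

theorem fisherProfile_ode {k : ℝ} (hk : 0 ≤ k) (z : ℝ) :
    -(5 / 6) * (-2 * k * exp z / (1 + k * exp z) ^ 3)
      = 6⁻¹ * (6 * k ^ 2 * exp z ^ 2 / (1 + k * exp z) ^ 4 - 2 * k * exp z / (1 + k * exp z) ^ 3)
        + fisherProfile k z * (1 - fisherProfile k z) := by
  have hg : 1 + k * exp z ≠ 0 := by positivity
  unfold fisherProfile
  field_simp
  ring

/-- The travelling-wave function `u(t,x) = (1 + k·exp(−(5/6)t + x/√6))⁻²` (with `k > 0`)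
satisfies the Fisher equation `∂ₜu = ∂ₓₓu + u(1−u)` for all `t, x ∈ ℝ`, and the initial
condition `u(0,x) = (1 + k·exp(x/√6))⁻²`. -/
theorem fisher_wave_solution_right (k : ℝ) (hk : 0 < k)
    (u : ℝ → ℝ → ℝ)
    (hu : ∀ t x, u t x = ((1 + k * Real.exp (-(5/6) * t + x / Real.sqrt 6)) ^ 2)⁻¹) :
    (∀ t x : ℝ,
      deriv (fun s => u s x) t
        = deriv (deriv (fun y => u t y)) x + u t x * (1 - u t x)) ∧
    (∀ x : ℝ, u 0 x = ((1 + k * Real.exp (x / Real.sqrt 6)) ^ 2)⁻¹) := by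
  have hwave : u = fun t x => fisherProfile k (-(5 / 6) * t + (√6)⁻¹ * x) := by
    funext t x
    rw [hu, fisherProfile, inv_mul_eq_div]
  subst hwave
  refine ⟨travelingWave_solves_reactionDiffusion (f := fun v => v * (1 - v))
    (hasDerivAt_fisherProfile hk.le) (hasDerivAt_fisherProfile_deriv hk.le) fun z => ?_,
    fun x => by simp [fisherProfile, inv_mul_eq_div]⟩
  rw [inv_pow, sq_sqrt (by norm_num)]
  exact fisherProfile_ode hk.le z
end

section
/- Let k > 0. The function u(t,x) = (1 + k·exp(−(5/6)t − x/√6))^(−2) satisfies the Fisher equation ∂ₜu(t,x) = ∂ₓₓu(t,x) + u(t,x)(1 − u(t,x)) for all t ∈ ℝ and x ∈ ℝ, and satisfies the initial condition u(0,x) = (1 + k·exp(−x/√6))^(−2). -/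
/-! The function is a travelling wave `u t x = φ (-(5/6) t - x / √6)` with profile
`φ w = (1 + k eʷ)⁻²`. By the chain rule the Fisher equation for such a wave reduces to the
profile equation `-(5/6) φ' = φ'' / 6 + φ (1 - φ)`, which after the substitution `z = k eʷ`
is an identity between rational functions of `z`; `k ≥ 0` keeps `1 + z` away from zero. -/

open Real

theorem deriv_comp_affine {φ : ℝ → ℝ} (hφ : Differentiable ℝ φ) (a c t : ℝ) :
    deriv (fun s => φ (a * s + c)) t = a * deriv φ (a * t + c) := by
  have hinner : HasDerivAt (fun s => a * s + c) a t := by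
    simpa using ((hasDerivAt_id t).const_mul a).add_const c
  exact ((hφ _).hasDerivAt.comp t hinner).deriv.trans (mul_comm _ _)

theorem fisher_of_travellingWave {φ : ℝ → ℝ} {a b : ℝ} (hφ : Differentiable ℝ φ)
    (hφ' : Differentiable ℝ (deriv φ))
    (hode : ∀ w, a * deriv φ w = b ^ 2 * deriv (deriv φ) w + φ w * (1 - φ w)) (t x : ℝ) :
    deriv (fun s => φ (a * s + b * x)) t
      = deriv (deriv (fun y => φ (a * t + b * y))) x
        + φ (a * t + b * x) * (1 - φ (a * t + b * x)) := by
  have hspace : deriv (fun y => φ (a * t + b * y)) = fun y => b * deriv φ (b * y + a * t) := by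
    funext y
    simp only [add_comm (a * t)]
    exact deriv_comp_affine hφ b (a * t) y
  rw [deriv_comp_affine hφ, hspace, deriv_const_mul _ (by fun_prop), deriv_comp_affine hφ',
    add_comm (b * x), hode]
  ring

noncomputable def fisherWaveProfile (k w : ℝ) : ℝ := ((1 + k * exp w) ^ 2)⁻¹

section Profile

variable {k : ℝ}

theorem hasDerivAt_fisherWaveProfile (hk : 0 ≤ k) (w : ℝ) :
    HasDerivAt (fisherWaveProfile k) (-2 * k * exp w / (1 + k * exp w) ^ 3) w := by
  have hpos : 0 < 1 + k * exp w := by positivity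
  have hbase : HasDerivAt (fun w => 1 + k * exp w) (k * exp w) w :=
    ((hasDerivAt_exp w).const_mul k).const_add 1
  have h : HasDerivAt (fisherWaveProfile k) _ w :=
    (hbase.fun_pow 2).fun_inv (pow_ne_zero 2 hpos.ne')
  convert h using 1
  field_simp
  ring

theorem deriv_fisherWaveProfile (hk : 0 ≤ k) :
    deriv (fisherWaveProfile k) = fun w => -2 * k * exp w / (1 + k * exp w) ^ 3 :=
  funext fun w => (hasDerivAt_fisherWaveProfile hk w).deriv

theorem hasDerivAt_deriv_fisherWaveProfile (hk : 0 ≤ k) (w : ℝ) :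
    HasDerivAt (deriv (fisherWaveProfile k))
      (-2 * k * exp w / (1 + k * exp w) ^ 3 + 6 * (k * exp w) ^ 2 / (1 + k * exp w) ^ 4) w := by
  have hpos : 0 < 1 + k * exp w := by positivity
  have hbase : HasDerivAt (fun w => 1 + k * exp w) (k * exp w) w :=
    ((hasDerivAt_exp w).const_mul k).const_add 1
  have h : HasDerivAt (fun w => -2 * k * exp w / (1 + k * exp w) ^ 3) _ w :=
    ((hasDerivAt_exp w).const_mul (-2 * k)).fun_div (hbase.fun_pow 3) (pow_ne_zero 3 hpos.ne')
  rw [deriv_fisherWaveProfile hk]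
  convert h using 1
  field_simp
  ring

theorem fisherWaveProfile_ode (hk : 0 ≤ k) (w : ℝ) :
    -(5 / 6) * deriv (fisherWaveProfile k) w
      = 1 / 6 * deriv (deriv (fisherWaveProfile k)) w
        + fisherWaveProfile k w * (1 - fisherWaveProfile k w) := by
  have hpos : 0 < 1 + k * exp w := by positivity
  rw [(hasDerivAt_deriv_fisherWaveProfile hk w).deriv, deriv_fisherWaveProfile hk,
    fisherWaveProfile]
  field_simp
  ring

end Profile

/-- The travelling-wave function `u(t,x) = (1 + k·exp(−(5/6)t − x/√6))⁻²` (with `k > 0`)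
satisfies the Fisher equation `∂ₜu = ∂ₓₓu + u(1−u)` for all `t, x ∈ ℝ`, and the initial
condition `u(0,x) = (1 + k·exp(−x/√6))⁻²`. -/
theorem fisher_wave_solution_left (k : ℝ) (hk : 0 < k)
    (u : ℝ → ℝ → ℝ)
    (hu : ∀ t x, u t x = ((1 + k * Real.exp (-(5/6) * t - x / Real.sqrt 6)) ^ 2)⁻¹) :
    (∀ t x : ℝ,
      deriv (fun s => u s x) t
        = deriv (deriv (fun y => u t y)) x + u t x * (1 - u t x)) ∧
    (∀ x : ℝ, u 0 x = ((1 + k * Real.exp (-x / Real.sqrt 6)) ^ 2)⁻¹) := by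
  have hwave : u = fun t x => fisherWaveProfile k (-(5 / 6) * t + -(√6)⁻¹ * x) := by
    funext t x
    rw [hu, fisherWaveProfile]
    ring_nf
  have hspeed : (-(√6)⁻¹) ^ 2 = (1 / 6 : ℝ) := by
    rw [neg_sq, inv_pow, sq_sqrt (by norm_num), one_div]
  refine ⟨fun t x => ?_, fun x => by rw [hu, mul_zero, zero_sub, neg_div]⟩
  subst hwave
  refine fisher_of_travellingWave
    (fun w => (hasDerivAt_fisherWaveProfile hk.le w).differentiableAt)
    (fun w => (hasDerivAt_deriv_fisherWaveProfile hk.le w).differentiableAt)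
    (fun w => ?_) t x
  rw [hspeed]
  exact fisherWaveProfile_ode hk.le w
end

section
/- Let X be a real Banach space, A : X → X a bounded linear operator, and R : X → X a twice continuously differentiable map. Let U : ℝ → X be differentiable with U′(t) = A(U(t)) + R(U(t)) for all t, and let t₀ ∈ ℝ, U₀ := U(t₀). For τ > 0 define the sequential-splitting explicit-Euler approximation starting with the nonlinear step: V(τ) := U₀ + τ·R(U₀) and Ũ(τ) := V(τ) + τ·A(V(τ)). Then, as τ → 0, U(t₀ + τ) − Ũ(τ) = (τ²/2)·(A(A(U₀)) − A(R(U₀)) + R′(U₀)(A(U₀)) + R′(U₀)(R(U₀))) + o(τ²); in particular the local error is O(τ²), so the combined method is of (local) order one. -/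
open Asymptotics Filter Topology

/-!
Along the solution `U' = f ∘ U` with `f = A + R` differentiable, so `U'` is differentiable
at `t₀` with `U''(t₀) = A (f U₀) + R′(U₀) (f U₀)`, and `U` has the second-order Taylor
expansion `U(t₀ + τ) = U₀ + τ f(U₀) + (τ²/2) U''(t₀) + o(τ²)`. Expanding the two Euler steps
gives `Ũ(τ) = U₀ + τ f(U₀) + τ² A(R(U₀))` exactly, and the difference of the two expansions
is the claimed leading term.
-/

theorem taylor_two_isLittleO_of_hasDerivAt {E : Type*} [NormedAddCommGroup E] [NormedSpace ℝ E]
    {u u' : ℝ → E} {u'' : E} {x₀ : ℝ} (hu : ∀ x, HasDerivAt u (u' x) x)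
    (hu' : HasDerivAt u' u'' x₀) :
    (fun τ : ℝ => u (x₀ + τ) - u x₀ - τ • u' x₀ - (τ ^ 2 / 2) • u'') =o[𝓝 0]
      fun τ => τ ^ 2 := by
  set r : ℝ → E := fun x => u x - (x - x₀) • u' x₀ - ((x - x₀) ^ 2 / 2) • u''
  have hr : ∀ x, HasDerivAt r (u' x - u' x₀ - (x - x₀) • u'') x := by
    intro x
    have hsq : HasDerivAt (fun y : ℝ => (y - x₀) ^ 2 / 2) (x - x₀) x := by
      simpa using (((hasDerivAt_id' x).sub_const x₀).pow 2).div_const 2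
    exact ((hu x).sub (((hasDerivAt_id x).sub_const x₀).smul_const (u' x₀))).sub
      (hsq.smul_const u'') |>.congr_deriv (by simp)
  have hr' : (fun x => u' x - u' x₀ - (x - x₀) • u'') =o[𝓝[Set.univ] x₀]
      fun x => (x - x₀) ^ 1 := by
    simpa using hasDerivAt_iff_isLittleO.mp hu'
  have hr_sub : (fun x => r x - r x₀) =o[𝓝 x₀] fun x => (x - x₀) ^ 2 := by
    simpa using convex_univ.isLittleO_pow_succ_real (Set.mem_univ x₀)
      (fun x _ => (hr x).hasDerivWithinAt) hr'
  have hshift : Tendsto (fun τ : ℝ => x₀ + τ) (𝓝 0) (𝓝 x₀) := by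
    simpa using (continuous_const_add x₀).tendsto 0
  refine (hr_sub.comp_tendsto hshift).congr (fun τ => ?_) (fun τ => ?_) <;> simp [r]
  abel

theorem seq_splitting_euler_nonlinear_first_general
    {X : Type*} [NormedAddCommGroup X] [NormedSpace ℝ X]
    (A : X →L[ℝ] X) (R : X → X) (hR : ContDiff ℝ 2 R)
    (U : ℝ → X) (hU : ∀ t : ℝ, HasDerivAt U (A (U t) + R (U t)) t)
    (t₀ : ℝ) (U₀ : X) (hU₀ : U₀ = U t₀)
    (V Utilde : ℝ → X)
    (hV : ∀ τ : ℝ, 0 < τ → V τ = U₀ + τ • R U₀)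
    (hUt : ∀ τ : ℝ, 0 < τ → Utilde τ = V τ + τ • A (V τ)) :
    ((fun τ : ℝ =>
        U (t₀ + τ) - Utilde τ -
          (τ ^ 2 / 2) •
            (A (A U₀) - A (R U₀) + fderiv ℝ R U₀ (A U₀) + fderiv ℝ R U₀ (R U₀)))
      =o[𝓝[>] 0] fun τ : ℝ => τ ^ 2) ∧
    ((fun τ : ℝ => U (t₀ + τ) - Utilde τ) =O[𝓝[>] 0] fun τ : ℝ => τ ^ 2) := by
  subst hU₀
  set c := A (A (U t₀)) - A (R (U t₀)) + fderiv ℝ R (U t₀) (A (U t₀))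
    + fderiv ℝ R (U t₀) (R (U t₀))
  have hU' : HasDerivAt (fun t => A (U t) + R (U t))
      (A (A (U t₀) + R (U t₀)) + fderiv ℝ R (U t₀) (A (U t₀) + R (U t₀))) t₀ :=
    (A.hasFDerivAt.comp_hasDerivAt t₀ (hU t₀)).add
      ((hR.differentiable two_ne_zero _).hasFDerivAt.comp_hasDerivAt t₀ (hU t₀))
  have hTaylor := (taylor_two_isLittleO_of_hasDerivAt hU hU').mono
    (nhdsWithin_le_nhds (s := Set.Ioi 0))
  have hError : (fun τ : ℝ => U (t₀ + τ) - Utilde τ - (τ ^ 2 / 2) • c) =o[𝓝[>] 0]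
      fun τ => τ ^ 2 := by
    refine hTaylor.congr' (eventually_nhdsWithin_of_forall fun τ hτ => ?_) .rfl
    dsimp only
    rw [hUt τ hτ, hV τ hτ]
    simp only [c, map_add, map_smul, smul_add, smul_sub]
    module
  have hLeading : (fun τ : ℝ => (τ ^ 2 / 2) • c) =O[𝓝[>] 0] fun τ : ℝ => τ ^ 2 := by
    simpa [div_eq_inv_mul] using
      ((isBigO_refl (fun τ : ℝ => τ ^ 2) _).const_mul_left (1 / 2)).smul
        (isBigO_const_const c (one_ne_zero (α := ℝ)) _)
  exact ⟨hError, (hError.isBigO.add hLeading).congr_left fun τ => sub_add_cancel _ _⟩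

/-- Sequential splitting (nonlinear step first) combined with the explicit Euler method:
with `V(τ) = U₀ + τR(U₀)` and `Ũ(τ) = V(τ) + τA(V(τ))`, the local error satisfies, as
`τ → 0⁺`,
`U(t₀+τ) − Ũ(τ) = (τ²/2)(A(A(U₀)) − A(R(U₀)) + R′(U₀)(A(U₀)) + R′(U₀)(R(U₀))) + o(τ²)`;
in particular the local error is `O(τ²)`, so the combined method is of (local) order one. -/
theorem seq_splitting_euler_nonlinear_first
    {X : Type*} [NormedAddCommGroup X] [NormedSpace ℝ X] [CompleteSpace X]
    (A : X →L[ℝ] X) (R : X → X) (hR : ContDiff ℝ 2 R)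
    (U : ℝ → X) (hU : ∀ t : ℝ, HasDerivAt U (A (U t) + R (U t)) t)
    (t₀ : ℝ) (U₀ : X) (hU₀ : U₀ = U t₀)
    (V Utilde : ℝ → X)
    (hV : ∀ τ : ℝ, 0 < τ → V τ = U₀ + τ • R U₀)
    (hUt : ∀ τ : ℝ, 0 < τ → Utilde τ = V τ + τ • A (V τ)) :
    ((fun τ : ℝ =>
        U (t₀ + τ) - Utilde τ -
          (τ ^ 2 / 2) •
            (A (A U₀) - A (R U₀) + fderiv ℝ R U₀ (A U₀) + fderiv ℝ R U₀ (R U₀)))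
      =o[𝓝[>] 0] fun τ : ℝ => τ ^ 2) ∧
    ((fun τ : ℝ => U (t₀ + τ) - Utilde τ) =O[𝓝[>] 0] fun τ : ℝ => τ ^ 2) :=
  seq_splitting_euler_nonlinear_first_general A R hR U hU t₀ U₀ hU₀ V Utilde hV hUt
end

section
/- Let X be a real Banach space, A : X → X a bounded linear operator, and R : X → X a twice continuously differentiable map. Let U : ℝ → X be differentiable with U′(t) = A(U(t)) + R(U(t)) for all t, and let t₀ ∈ ℝ, U₀ := U(t₀). Fix ω ∈ [0,1] and for τ > 0 define the weighted-splitting explicit-Euler approximation Ũ(τ) := ω·Ũ_RN(τ) + (1−ω)·Ũ_NR(τ), where Ũ_RN(τ) := (U₀ + τR(U₀)) + τA(U₀ + τR(U₀)) (reaction step first) and Ũ_NR(τ) := (U₀ + τA(U₀)) + τR(U₀ + τA(U₀)) (linear step first). Then, as τ → 0, U(t₀ + τ) − Ũ(τ) = (τ²/2)·(A(A(U₀)) + (1−2ω)·A(R(U₀)) + (2ω−1)·R′(U₀)(A(U₀)) + R′(U₀)(R(U₀))) + o(τ²). -/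
open Asymptotics Filter Topology

/-!
Both the exact flow and the scheme are expanded to second order in `τ`. For the exact solution,
`U'' = F'(U) U'` with `F = A + R`, so `U(t₀+τ) = U₀ + τ V + (τ²/2)(A V + R'(U₀) V) + o(τ²)` where
`V = A U₀ + R U₀`. Both orderings of the Euler splitting agree with this up to first order, and
their `τ²` terms are `A (R U₀)` and `R'(U₀)(A U₀)` respectively, the latter coming from
`R (U₀ + τ A U₀) = R U₀ + τ R'(U₀)(A U₀) + o(τ)`. The local error is the difference.
-/

section

variable {E : Type*} [NormedAddCommGroup E] [NormedSpace ℝ E]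

theorem isLittleO_taylor_two {f f' : ℝ → E} {f'' : E} {a : ℝ}
    (hf : ∀ t, HasDerivAt f (f' t) t) (hf' : HasDerivAt f' f'' a) :
    (fun τ : ℝ => f (a + τ) - f a - τ • f' a - (τ ^ 2 / 2) • f'') =o[𝓝 0] fun τ => τ ^ 2 := by
  set g : ℝ → E := fun τ => f (a + τ) - f a - τ • f' a - (τ ^ 2 / 2) • f''
  have hg : ∀ τ, HasDerivAt g (f' (a + τ) - f' a - τ • f'') τ := by
    intro τ
    have hsq : HasDerivAt (fun τ : ℝ => τ ^ 2 / 2) τ τ := by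
      simpa using (hasDerivAt_pow 2 τ).div_const 2
    have hshift : HasDerivAt (fun τ => f (a + τ)) (f' (a + τ)) τ :=
      (hf (a + τ)).comp_const_add a τ
    exact ((hshift.sub_const (f a)).sub (by simpa using (hasDerivAt_id τ).smul_const (f' a))).sub
      (hsq.smul_const f'')
  have hg' : (fun τ : ℝ => f' (a + τ) - f' a - τ • f'') =o[𝓝 0] fun τ => (τ - 0) ^ 1 := by
    simpa using hasDerivAt_iff_isLittleO_nhds_zero.mp hf'
  have := convex_univ.isLittleO_pow_succ_real (Set.mem_univ 0)
    (fun τ _ => (hg τ).hasDerivWithinAt) (by simpa only [nhdsWithin_univ] using hg')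
  simp only [nhdsWithin_univ, sub_zero] at this
  simpa [g] using this

theorem isLittleO_autonomous_taylor_two {F : E → E} {F' : E →L[ℝ] E} {u : ℝ → E} {t₀ : ℝ}
    (hu : ∀ t, HasDerivAt u (F (u t)) t) (hF : HasFDerivAt F F' (u t₀)) :
    (fun τ : ℝ => u (t₀ + τ) - u t₀ - τ • F (u t₀) - (τ ^ 2 / 2) • F' (F (u t₀)))
      =o[𝓝 0] fun τ => τ ^ 2 :=
  isLittleO_taylor_two hu (hF.comp_hasDerivAt t₀ (hu t₀))

theorem HasFDerivAt.isLittleO_smul_sub_along_line {R : E → E} {R' : E →L[ℝ] E} {x : E}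
    (hR : HasFDerivAt R R' x) (v : E) :
    (fun τ : ℝ => τ • (R (x + τ • v) - R x - τ • R' v)) =o[𝓝 0] fun τ => τ ^ 2 := by
  have hline : HasDerivAt (fun τ : ℝ => R (x + τ • v)) (R' v) 0 := by
    have hin : HasDerivAt (fun τ : ℝ => x + τ • v) v 0 := by
      simpa using ((hasDerivAt_id (0 : ℝ)).smul_const v).const_add x
    exact (by simpa using hR : HasFDerivAt R R' (x + (0 : ℝ) • v)).comp_hasDerivAt 0 hin
  have hrem := hasDerivAt_iff_isLittleO_nhds_zero.mp hline
  simp only [zero_add, zero_smul, add_zero] at hrem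
  simpa only [smul_eq_mul, sq] using (isBigO_refl (fun τ : ℝ => τ) (𝓝 0)).smul_isLittleO hrem

end

theorem weighted_splitting_euler_general
    {X : Type*} [NormedAddCommGroup X] [NormedSpace ℝ X]
    (A : X →L[ℝ] X) (R : X → X) (hR : ContDiff ℝ 2 R)
    (U : ℝ → X) (hU : ∀ t : ℝ, HasDerivAt U (A (U t) + R (U t)) t)
    (t₀ : ℝ) (U₀ : X) (hU₀ : U₀ = U t₀)
    (ω : ℝ)
    (UtildeRN UtildeNR Utilde : ℝ → X)
    (hRN : ∀ τ : ℝ, 0 < τ →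
      UtildeRN τ = (U₀ + τ • R U₀) + τ • A (U₀ + τ • R U₀))
    (hNR : ∀ τ : ℝ, 0 < τ →
      UtildeNR τ = (U₀ + τ • A U₀) + τ • R (U₀ + τ • A U₀))
    (hUt : ∀ τ : ℝ, 0 < τ → Utilde τ = ω • UtildeRN τ + (1 - ω) • UtildeNR τ) :
    (fun τ : ℝ =>
        U (t₀ + τ) - Utilde τ -
          (τ ^ 2 / 2) •
            (A (A U₀) + (1 - 2 * ω) • A (R U₀) + (2 * ω - 1) • fderiv ℝ R U₀ (A U₀) +
              fderiv ℝ R U₀ (R U₀)))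
      =o[𝓝[>] 0] fun τ : ℝ => τ ^ 2 := by
  subst hU₀
  set R' := fderiv ℝ R (U t₀)
  have hRU : HasFDerivAt R R' (U t₀) := (hR.differentiable two_ne_zero (U t₀)).hasFDerivAt
  have hexact :=
    isLittleO_autonomous_taylor_two (F := fun x => A x + R x) hU (A.hasFDerivAt.add hRU)
  have hstep := (hRU.isLittleO_smul_sub_along_line (A (U t₀))).const_smul_left (1 - ω)
  -- For `τ > 0` the local error is exactly the Taylor remainder of `U` minus `(1 - ω)` times the
  -- remainder of `R` along the linear Euler step; everything else cancels.
  refine ((hexact.sub hstep).mono nhdsWithin_le_nhds).congr' ?_ EventuallyEq.rfl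
  filter_upwards [self_mem_nhdsWithin] with τ hτ
  rw [hUt τ hτ, hRN τ hτ, hNR τ hτ]
  simp only [Pi.smul_apply, add_apply, map_add, map_smul]
  module

/-- Weighted sequential splitting with weight `ω ∈ [0,1]` combined with the explicit Euler
method: with `Ũ_RN(τ) = (U₀+τR(U₀)) + τA(U₀+τR(U₀))` (reaction first),
`Ũ_NR(τ) = (U₀+τA(U₀)) + τR(U₀+τA(U₀))` (linear first), and
`Ũ(τ) = ω·Ũ_RN(τ) + (1−ω)·Ũ_NR(τ)`, the local error satisfies, as `τ → 0⁺`,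
`U(t₀+τ) − Ũ(τ) = (τ²/2)(A(A(U₀)) + (1−2ω)A(R(U₀)) + (2ω−1)R′(U₀)(A(U₀)) + R′(U₀)(R(U₀))) + o(τ²)`. -/
theorem weighted_splitting_euler
    {X : Type*} [NormedAddCommGroup X] [NormedSpace ℝ X] [CompleteSpace X]
    (A : X →L[ℝ] X) (R : X → X) (hR : ContDiff ℝ 2 R)
    (U : ℝ → X) (hU : ∀ t : ℝ, HasDerivAt U (A (U t) + R (U t)) t)
    (t₀ : ℝ) (U₀ : X) (hU₀ : U₀ = U t₀)
    (ω : ℝ) (hω0 : 0 ≤ ω) (hω1 : ω ≤ 1)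
    (UtildeRN UtildeNR Utilde : ℝ → X)
    (hRN : ∀ τ : ℝ, 0 < τ →
      UtildeRN τ = (U₀ + τ • R U₀) + τ • A (U₀ + τ • R U₀))
    (hNR : ∀ τ : ℝ, 0 < τ →
      UtildeNR τ = (U₀ + τ • A U₀) + τ • R (U₀ + τ • A U₀))
    (hUt : ∀ τ : ℝ, 0 < τ → Utilde τ = ω • UtildeRN τ + (1 - ω) • UtildeNR τ) :
    (fun τ : ℝ =>
        U (t₀ + τ) - Utilde τ -
          (τ ^ 2 / 2) •
            (A (A U₀) + (1 - 2 * ω) • A (R U₀) + (2 * ω - 1) • fderiv ℝ R U₀ (A U₀) +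
              fderiv ℝ R U₀ (R U₀)))
      =o[𝓝[>] 0] fun τ : ℝ => τ ^ 2 :=
  weighted_splitting_euler_general A R hR U hU t₀ U₀ hU₀ ω UtildeRN UtildeNR Utilde hRN hNR hUt
end

section
/- Let X be a real Banach space, A : X → X a bounded linear operator, and R : X → X a twice continuously differentiable map. Let U : ℝ → X be differentiable with U′(t) = A(U(t)) + R(U(t)) for all t, and let t₀ ∈ ℝ, U₀ := U(t₀). For τ > 0 define the symmetrically weighted splitting explicit-Euler approximation Ũ(τ) := ½·[(U₀ + τR(U₀)) + τA(U₀ + τR(U₀))] + ½·[(U₀ + τA(U₀)) + τR(U₀ + τA(U₀))]. Then, as τ → 0, U(t₀ + τ) − Ũ(τ) = (τ²/2)·(A(A(U₀)) + R′(U₀)(R(U₀))) + o(τ²); in particular the local error is O(τ²), so although symmetrically weighted splitting alone is of second order, its combination with the first-order Euler method is only a first-order method. -/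
open Asymptotics Filter Topology

/-!
Both the exact flow and the scheme agree with `U₀ + τ (A + R) U₀` to first order. At second
order the exact solution carries `(τ²/2) U''(t₀) = (τ²/2)(A + R′(U₀))(A + R)U₀`, whereas in the
averaged Euler steps only the cross terms `A R U₀` and `R′(U₀) A U₀` (the latter through
`R(U₀ + τ A U₀)`) appear, each with weight `τ²/2`. The missing squares `A A U₀` and
`R′(U₀) R U₀` are exactly the leading term of the local error.
-/

section

variable {X : Type*} [NormedAddCommGroup X] [NormedSpace ℝ X]

theorem isLittleO_taylor_two_of_hasDerivAt {f f' : ℝ → X} {t₀ : ℝ} {f'' : X}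
    (hf : ∀ t, HasDerivAt f (f' t) t) (hf' : HasDerivAt f' f'' t₀) :
    (fun h : ℝ => f (t₀ + h) - f t₀ - h • f' t₀ - (h ^ 2 / 2) • f'')
      =o[𝓝[>] 0] fun h => h ^ 2 := by
  let L : X →L[ℝ] ℝ →L[ℝ] X := ContinuousLinearMap.toSpanSingletonCLE.toContinuousLinearMap
  have hfF : ∀ t ∈ interior Set.univ, HasFDerivAt f (L (f' t)) t :=
    fun t _ => (hf t).hasFDerivAt
  have hfF' : HasFDerivWithinAt (fun t => L (f' t)) (L.comp (L f'')) (interior Set.univ) t₀ :=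
    (L.hasFDerivAt.comp t₀ hf'.hasFDerivAt).hasFDerivWithinAt
  simpa [L] using convex_univ.taylor_approx_two_segment hfF (Set.mem_univ t₀) hfF'
    (v := 0) (w := 1) (by simp) (by simp)

theorem DifferentiableAt.isLittleO_smul_sub_sub_fderiv {Y : Type*} [NormedAddCommGroup Y]
    [NormedSpace ℝ Y] {R : X → Y} {x : X} (hR : DifferentiableAt ℝ R x) (v : X) :
    (fun τ : ℝ => τ • (R (x + τ • v) - R x - τ • fderiv ℝ R x v)) =o[𝓝 0] fun τ => τ ^ 2 := by
  have hline : HasDerivAt (fun τ : ℝ => R (x + τ • v)) (fderiv ℝ R x v) 0 := by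
    have hdir : HasDerivAt (fun τ : ℝ => x + τ • v) v 0 := by
      simpa using ((hasDerivAt_id (0 : ℝ)).smul_const v).const_add x
    exact hR.hasFDerivAt.comp_hasDerivAt_of_eq 0 hdir (by simp)
  have hrem := hasDerivAt_iff_isLittleO.mp hline
  simp only [sub_zero, zero_smul, add_zero] at hrem
  simpa only [pow_two, smul_eq_mul] using (isBigO_refl (fun τ : ℝ => τ) _).smul_isLittleO hrem

/-- Symmetrically weighted splitting: the mean of the two sequential splittings `R`-then-`A` and
`A`-then-`R`, each subproblem solved by one explicit Euler step of length `τ`. -/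
noncomputable def swsEulerStep (A : X →L[ℝ] X) (R : X → X) (τ : ℝ) (x : X) : X :=
  (1 / 2 : ℝ) • ((x + τ • R x) + τ • A (x + τ • R x)) +
    (1 / 2 : ℝ) • ((x + τ • A x) + τ • R (x + τ • A x))

theorem swsEulerStep_eq (A : X →L[ℝ] X) (R : X → X) (τ : ℝ) (x : X) :
    swsEulerStep A R τ x =
      x + τ • (A x + R x) + (τ ^ 2 / 2) • A (R x) + (τ / 2) • (R (x + τ • A x) - R x) := by
  simp only [swsEulerStep, map_add, map_smul]
  module

end

theorem symmetrically_weighted_splitting_euler_general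
    {X : Type*} [NormedAddCommGroup X] [NormedSpace ℝ X]
    (A : X →L[ℝ] X) (R : X → X) (hR : ContDiff ℝ 2 R)
    (U : ℝ → X) (hU : ∀ t : ℝ, HasDerivAt U (A (U t) + R (U t)) t)
    (t₀ : ℝ) (U₀ : X) (hU₀ : U₀ = U t₀)
    (Utilde : ℝ → X)
    (hUt : ∀ τ : ℝ, 0 < τ →
      Utilde τ =
        (1 / 2 : ℝ) • ((U₀ + τ • R U₀) + τ • A (U₀ + τ • R U₀)) +
          (1 / 2 : ℝ) • ((U₀ + τ • A U₀) + τ • R (U₀ + τ • A U₀))) :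
    ((fun τ : ℝ =>
        U (t₀ + τ) - Utilde τ -
          (τ ^ 2 / 2) • (A (A U₀) + fderiv ℝ R U₀ (R U₀)))
      =o[𝓝[>] 0] fun τ : ℝ => τ ^ 2) ∧
    ((fun τ : ℝ => U (t₀ + τ) - Utilde τ) =O[𝓝[>] 0] fun τ : ℝ => τ ^ 2) := by
  subst hU₀
  have hRd : DifferentiableAt ℝ R (U t₀) := hR.differentiable (by norm_num) _
  have hU'' : HasDerivAt (fun t => A (U t) + R (U t))
      (A (A (U t₀) + R (U t₀)) + fderiv ℝ R (U t₀) (A (U t₀) + R (U t₀))) t₀ :=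
    (A.hasFDerivAt.comp_hasDerivAt t₀ (hU t₀)).add (hRd.hasFDerivAt.comp_hasDerivAt t₀ (hU t₀))
  have taylor := isLittleO_taylor_two_of_hasDerivAt hU hU''
  have euler := (hRd.isLittleO_smul_sub_sub_fderiv (A (U t₀))).mono
    (nhdsWithin_le_nhds (s := Set.Ioi 0))
  -- The error is the second-order Taylor remainder of `U` minus half the first-order
  -- remainder of `R` along `A U₀`, scaled by `τ`.
  have hlittle : (fun τ : ℝ => U (t₀ + τ) - Utilde τ -
      (τ ^ 2 / 2) • (A (A (U t₀)) + fderiv ℝ R (U t₀) (R (U t₀)))) =o[𝓝[>] 0] fun τ => τ ^ 2 := by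
    refine (taylor.sub (euler.const_smul_left (1 / 2 : ℝ))).congr' ?_ EventuallyEq.rfl
    filter_upwards [self_mem_nhdsWithin] with τ (hτ : 0 < τ)
    rw [show Utilde τ = swsEulerStep A R τ (U t₀) from hUt τ hτ, swsEulerStep_eq]
    simp only [Pi.smul_apply, map_add]
    module
  have hleading : (fun τ : ℝ => (τ ^ 2 / 2) • (A (A (U t₀)) + fderiv ℝ R (U t₀) (R (U t₀))))
      =O[𝓝[>] 0] fun τ => τ ^ 2 :=
    IsBigO.of_bound ‖A (A (U t₀)) + fderiv ℝ R (U t₀) (R (U t₀))‖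
      (Eventually.of_forall fun τ => by rw [norm_smul, mul_comm]; gcongr; simp; positivity)
  exact ⟨hlittle, (hlittle.isBigO.add hleading).congr_left fun τ => sub_add_cancel _ _⟩

/-- Symmetrically weighted splitting combined with the explicit Euler method: with
`Ũ(τ) = ½[(U₀+τR(U₀)) + τA(U₀+τR(U₀))] + ½[(U₀+τA(U₀)) + τR(U₀+τA(U₀))]`,
the local error satisfies, as `τ → 0⁺`,
`U(t₀+τ) − Ũ(τ) = (τ²/2)(A(A(U₀)) + R′(U₀)(R(U₀))) + o(τ²)`;
in particular the local error is `O(τ²)`: although symmetrically weighted splitting alone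
is of second order, its combination with the first-order Euler method is only a
first-order method. -/
theorem symmetrically_weighted_splitting_euler
    {X : Type*} [NormedAddCommGroup X] [NormedSpace ℝ X] [CompleteSpace X]
    (A : X →L[ℝ] X) (R : X → X) (hR : ContDiff ℝ 2 R)
    (U : ℝ → X) (hU : ∀ t : ℝ, HasDerivAt U (A (U t) + R (U t)) t)
    (t₀ : ℝ) (U₀ : X) (hU₀ : U₀ = U t₀)
    (Utilde : ℝ → X)
    (hUt : ∀ τ : ℝ, 0 < τ →
      Utilde τ =
        (1 / 2 : ℝ) • ((U₀ + τ • R U₀) + τ • A (U₀ + τ • R U₀)) +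
          (1 / 2 : ℝ) • ((U₀ + τ • A U₀) + τ • R (U₀ + τ • A U₀))) :
    ((fun τ : ℝ =>
        U (t₀ + τ) - Utilde τ -
          (τ ^ 2 / 2) • (A (A U₀) + fderiv ℝ R U₀ (R U₀)))
      =o[𝓝[>] 0] fun τ : ℝ => τ ^ 2) ∧
    ((fun τ : ℝ => U (t₀ + τ) - Utilde τ) =O[𝓝[>] 0] fun τ : ℝ => τ ^ 2) :=
  symmetrically_weighted_splitting_euler_general A R hR U hU t₀ U₀ hU₀ Utilde hUt
end

section
/- Let X be a real Banach space, A : X → X a bounded linear operator, and R : X → X a three times continuously differentiable map. Let U : ℝ → X be differentiable with U′(t) = A(U(t)) + R(U(t)) for all t, and let t₀ ∈ ℝ, U₀ := U(t₀). For τ > 0 define the sequential-splitting improved-Euler approximation starting with the nonlinear step: V(τ) := U₀ + τ·R(U₀ + (τ/2)·R(U₀)) and Ũ(τ) := V(τ) + τ·A(V(τ) + (τ/2)·A(V(τ))). Then, as τ → 0, U(t₀ + τ) − Ũ(τ) = (τ²/2)·(R′(U₀)(A(U₀)) − A(R(U₀))) + o(τ²); in particular, although the improved Euler scheme is of second order,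 sequential splitting combined with it yields only a first-order method. -/
/-!
Both the exact flow and the split scheme agree with `U₀ + τ (A + R) U₀` to first order, so
everything is decided by the `τ²` coefficients. For the exact solution this is
`(A + R'(U₀)) (A + R) U₀ / 2` (second-order Taylor expansion, via the mean value inequality).
For the scheme, the nonlinear improved Euler step contributes `R'(U₀) R(U₀) / 2`, and the linear
step is exactly `1 + τA + (τ²/2)A²`, contributing `A R(U₀) + A² U₀ / 2`. Their difference is half
the commutator term `R'(U₀) A U₀ - A R(U₀)`.
-/

open Asymptotics Filter Topology

section

variable {X : Type*} [NormedAddCommGroup X] [NormedSpace ℝ X]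

theorem isLittleO_sub_taylor_two_of_hasDerivAt {g g' : ℝ → X} {b : X}
    (hg : ∀ t, HasDerivAt g (g' t) t) (hg' : HasDerivAt g' b 0) :
    (fun τ : ℝ => g τ - (g 0 + τ • g' 0 + (τ ^ 2 / 2) • b)) =o[𝓝 0] fun τ => τ ^ 2 := by
  have hderiv (t : ℝ) : HasDerivAt (fun τ : ℝ => g τ - τ • g' 0 - (τ ^ 2 / 2) • b)
      (g' t - g' 0 - t • b) t := by
    have hsq : HasDerivAt (fun τ : ℝ => τ ^ 2 / 2) t t := by
      simpa using (hasDerivAt_pow 2 t).div_const 2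
    exact ((hg t).sub (by simpa using (hasDerivAt_id t).smul_const (g' 0))).sub
      (hsq.smul_const b)
  have hsmall : (fun t : ℝ => g' t - g' 0 - t • b) =o[𝓝[Set.univ] 0] fun t => (t - 0) ^ 1 := by
    simpa using hg'.isLittleO
  have := convex_univ.isLittleO_pow_succ_real (Set.mem_univ 0)
    (fun t _ => (hderiv t).hasDerivWithinAt) hsmall
  simp only [nhdsWithin_univ, sub_zero] at this
  refine this.congr' (Eventually.of_forall fun τ => ?_) (Eventually.of_forall fun τ => rfl)
  simp only [zero_smul, sub_zero, ne_eq, OfNat.ofNat_ne_zero, not_false_eq_true, zero_pow, zero_div]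
  abel

theorem isLittleO_sub_taylor_two_of_autonomous_ode {F : X → X} {F' : X →L[ℝ] X} {U : ℝ → X}
    {t₀ : ℝ} (hU : ∀ t, HasDerivAt U (F (U t)) t) (hF : HasFDerivAt F F' (U t₀)) :
    (fun τ : ℝ => U (t₀ + τ) - (U t₀ + τ • F (U t₀) + (τ ^ 2 / 2) • F' (F (U t₀))))
      =o[𝓝 0] fun τ => τ ^ 2 := by
  have hshift (t : ℝ) : HasDerivAt (fun τ => U (t₀ + τ)) (F (U (t₀ + t))) t :=
    (hU (t₀ + t)).comp_const_add t₀ t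
  have hF_along : HasDerivAt (fun τ => F (U (t₀ + τ))) (F' (F (U t₀))) 0 :=
    hF.comp_hasDerivAt_of_eq 0 (by simpa using hshift 0) (by simp)
  simpa using isLittleO_sub_taylor_two_of_hasDerivAt hshift hF_along

noncomputable def improvedEulerStep (f : X → X) (τ : ℝ) (y : X) : X :=
  y + τ • f (y + (τ / 2) • f y)

theorem improvedEulerStep_isLittleO {f : X → X} {f' : X →L[ℝ] X} {y : X}
    (hf : HasFDerivAt f f' y) :
    (fun τ : ℝ => improvedEulerStep f τ y - (y + τ • f y + (τ ^ 2 / 2) • f' (f y)))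
      =o[𝓝 0] fun τ => τ ^ 2 := by
  have hstage : HasDerivAt (fun τ : ℝ => y + (τ / 2) • f y) ((1 / 2 : ℝ) • f y) 0 :=
    ((hasDerivAt_id' 0).div_const 2).smul_const (f y) |>.const_add y |>.congr_deriv (by simp)
  have hslope : HasDerivAt (fun τ : ℝ => f (y + (τ / 2) • f y)) ((1 / 2 : ℝ) • f' (f y)) 0 :=
    (hf.comp_hasDerivAt_of_eq 0 hstage (by simp)).congr_deriv (by simp)
  refine ((isBigO_refl (fun τ : ℝ => τ) _).smul_isLittleO hslope.isLittleO).congr'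
    (Eventually.of_forall fun τ => ?_) (Eventually.of_forall fun τ => by simp [sq])
  simp only [improvedEulerStep, sub_zero, zero_div, zero_smul, add_zero]
  module

theorem improvedEulerStep_clm (A : X →L[ℝ] X) (τ : ℝ) (v : X) :
    improvedEulerStep A τ v = v + τ • A v + (τ ^ 2 / 2) • A (A v) := by
  simp only [improvedEulerStep, map_add, map_smul]
  module

theorem improvedEulerStep_clm_isLittleO (A : X →L[ℝ] X) {V : ℝ → X} {v a c : X}
    (hV : (fun τ : ℝ => V τ - (v + τ • a + (τ ^ 2 / 2) • c)) =o[𝓝 0] fun τ => τ ^ 2) :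
    (fun τ : ℝ => improvedEulerStep A τ (V τ) -
        (v + τ • (a + A v) + (τ ^ 2 / 2) • (c + (2 : ℝ) • A a + A (A v))))
      =o[𝓝 0] fun τ => τ ^ 2 := by
  set e := fun τ : ℝ => V τ - (v + τ • a + (τ ^ 2 / 2) • c)
  have hbounded {k : ℝ → ℝ} (hk : Continuous k) {f : ℝ → X} (hf : f =o[𝓝 0] fun τ => τ ^ 2) :
      (fun τ => k τ • f τ) =o[𝓝 0] fun τ => τ ^ 2 := by
    simpa using (hk.tendsto 0).isBigO_one ℝ |>.smul_isLittleO hf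
  have hA := hbounded (k := fun τ => τ) continuous_id ((A.isBigO_comp e _).trans_isLittleO hV)
  have hAA := hbounded (k := fun τ => τ ^ 2 / 2) (by fun_prop)
    (((A.comp A).isBigO_comp e _).trans_isLittleO hV)
  -- the `τ³` and `τ⁴` terms of `(1 + τA + (τ²/2)A²) (v + τa + (τ²/2)c)`
  have hcubic : (fun τ : ℝ => τ ^ 3 • ((1 / 2 : ℝ) • (A c + A (A a)) + (τ / 4) • A (A c)))
      =o[𝓝 0] fun τ => τ ^ 2 := by
    have hw : Continuous fun τ : ℝ => (1 / 2 : ℝ) • (A c + A (A a)) + (τ / 4) • A (A c) := by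
      fun_prop
    simpa using (isLittleO_pow_pow (by norm_num : 2 < 3)).smul_isBigO ((hw.tendsto 0).isBigO_one ℝ)
  refine (((hV.add hA).add hAA).add hcubic).congr' (Eventually.of_forall fun τ => ?_)
    (Eventually.of_forall fun τ => rfl)
  simp only [improvedEulerStep_clm, e, ContinuousLinearMap.comp_apply, map_add, map_sub, map_smul]
  module

end

theorem seq_splitting_improved_euler_nonlinear_first_general
    {X : Type*} [NormedAddCommGroup X] [NormedSpace ℝ X]
    (A : X →L[ℝ] X) (R : X → X) (hR : ContDiff ℝ 3 R)
    (U : ℝ → X) (hU : ∀ t : ℝ, HasDerivAt U (A (U t) + R (U t)) t)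
    (t₀ : ℝ) (U₀ : X) (hU₀ : U₀ = U t₀)
    (V Utilde : ℝ → X)
    (hV : ∀ τ : ℝ, 0 < τ → V τ = U₀ + τ • R (U₀ + (τ / 2) • R U₀))
    (hUt : ∀ τ : ℝ, 0 < τ →
      Utilde τ = V τ + τ • A (V τ + (τ / 2) • A (V τ))) :
    (fun τ : ℝ =>
        U (t₀ + τ) - Utilde τ -
          (τ ^ 2 / 2) • (fderiv ℝ R U₀ (A U₀) - A (R U₀)))
      =o[𝓝[>] 0] fun τ : ℝ => τ ^ 2 := by
  subst hU₀
  have hR' : HasFDerivAt R (fderiv ℝ R (U t₀)) (U t₀) :=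
    (hR.differentiable (by norm_num) _).hasFDerivAt
  have hexact := isLittleO_sub_taylor_two_of_autonomous_ode hU (A.hasFDerivAt.add hR')
  have hsplit := improvedEulerStep_clm_isLittleO A (improvedEulerStep_isLittleO hR')
  refine ((hexact.sub hsplit).mono nhdsWithin_le_nhds).congr' ?_ EventuallyEq.rfl
  filter_upwards [self_mem_nhdsWithin] with τ (hτ : 0 < τ)
  have hscheme : Utilde τ = improvedEulerStep A τ (improvedEulerStep R τ (U t₀)) := by
    rw [hUt τ hτ, hV τ hτ]; rfl
  simp only [hscheme, Pi.add_apply, add_apply, map_add]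
  module

/-- Sequential splitting (nonlinear step first) combined with the second-order improved
Euler (explicit midpoint) scheme: with `V(τ) = U₀ + τR(U₀ + (τ/2)R(U₀))` and
`Ũ(τ) = V(τ) + τA(V(τ) + (τ/2)A(V(τ)))`, the local error satisfies, as `τ → 0⁺`,
`U(t₀+τ) − Ũ(τ) = (τ²/2)(R′(U₀)(A(U₀)) − A(R(U₀))) + o(τ²)`; in particular, although the
improved Euler scheme is of second order, sequential splitting combined with it yields
only a first-order method. -/
theorem seq_splitting_improved_euler_nonlinear_first
    {X : Type*} [NormedAddCommGroup X] [NormedSpace ℝ X] [CompleteSpace X]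
    (A : X →L[ℝ] X) (R : X → X) (hR : ContDiff ℝ 3 R)
    (U : ℝ → X) (hU : ∀ t : ℝ, HasDerivAt U (A (U t) + R (U t)) t)
    (t₀ : ℝ) (U₀ : X) (hU₀ : U₀ = U t₀)
    (V Utilde : ℝ → X)
    (hV : ∀ τ : ℝ, 0 < τ → V τ = U₀ + τ • R (U₀ + (τ / 2) • R U₀))
    (hUt : ∀ τ : ℝ, 0 < τ →
      Utilde τ = V τ + τ • A (V τ + (τ / 2) • A (V τ))) :
    (fun τ : ℝ =>
        U (t₀ + τ) - Utilde τ -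
          (τ ^ 2 / 2) • (fderiv ℝ R U₀ (A U₀) - A (R U₀)))
      =o[𝓝[>] 0] fun τ : ℝ => τ ^ 2 :=
  seq_splitting_improved_euler_nonlinear_first_general A R hR U hU t₀ U₀ hU₀ V Utilde hV hUt
end

section
/- Let X be a real Banach space and let A, B be bounded linear operators on X. If exp(τA) ∘ exp(τB) = exp(τ(A+B)) for every τ ∈ ℝ, then also exp((τ/2)A) ∘ exp(τB) ∘ exp((τ/2)A) = exp(τ(A+B)) for every τ ∈ ℝ; that is, if the sequential splitting of the semigroups generated by A and B is exact, then the Marchuk–Strang splitting is exact as well. -/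
/-!
The exponentials of the multiples of a single element form a one-parameter group, so
`exp (-τ • A) * exp (-τ • B) = exp (-τ • (A + B))` says that `exp (τ • B) * exp (τ • A)` and
`exp (τ • (A + B))` are both inverse to the same element: exactness of the sequential splitting
in one order gives it in the reverse order. Splitting every flow at `τ / 2`, the Strang product is
`(exp (τ/2 • A) * exp (τ/2 • B)) * (exp (τ/2 • B) * exp (τ/2 • A))`, and both factors are
`exp (τ/2 • (A + B))`.
-/

open NormedSpace

namespace NormedSpace

variable {𝔸 : Type*} [NormedRing 𝔸] [NormedAlgebra ℝ 𝔸] [CompleteSpace 𝔸]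

theorem exp_add_smul (x : 𝔸) (s t : ℝ) : exp ((s + t) • x) = exp (s • x) * exp (t • x) := by
  let : NormedAlgebra ℚ 𝔸 := NormedAlgebra.restrictScalars ℚ ℝ 𝔸
  rw [add_smul, exp_add_of_commute (((Commute.refl x).smul_left s).smul_right t)]

theorem exp_smul_mul_exp_neg_smul (x : 𝔸) (t : ℝ) : exp (t • x) * exp (-t • x) = 1 := by
  rw [← exp_add_smul, add_neg_cancel, zero_smul, exp_zero]

theorem exp_smul_mul_exp_smul_swap {a b : 𝔸}
    (h : ∀ t : ℝ, exp (t • a) * exp (t • b) = exp (t • (a + b))) (t : ℝ) :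
    exp (t • b) * exp (t • a) = exp (t • (a + b)) := by
  have h_left : exp (t • b) * exp (t • a) * exp (-t • (a + b)) = 1 := by
    rw [← h (-t), mul_assoc, ← mul_assoc (exp (t • a)), exp_smul_mul_exp_neg_smul, one_mul,
      exp_smul_mul_exp_neg_smul]
  have h_right : exp (-t • (a + b)) * exp (t • (a + b)) = 1 := by
    simpa using exp_smul_mul_exp_neg_smul (a + b) (-t)
  exact left_inv_eq_right_inv h_left h_right

theorem exp_half_smul_mul_exp_smul_mul_exp_half_smul {a b : 𝔸}
    (h : ∀ t : ℝ, exp (t • a) * exp (t • b) = exp (t • (a + b))) (t : ℝ) :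
    exp ((t / 2) • a) * (exp (t • b) * exp ((t / 2) • a)) = exp (t • (a + b)) := by
  have h_halves (x : 𝔸) : exp (t • x) = exp ((t / 2) • x) * exp ((t / 2) • x) := by
    rw [← exp_add_smul, add_halves]
  calc exp ((t / 2) • a) * (exp (t • b) * exp ((t / 2) • a))
      = (exp ((t / 2) • a) * exp ((t / 2) • b)) * (exp ((t / 2) • b) * exp ((t / 2) • a)) := by
        rw [h_halves b]
        simp only [mul_assoc]
    _ = exp ((t / 2) • (a + b)) * exp ((t / 2) • (a + b)) := by
        rw [h, exp_smul_mul_exp_smul_swap h]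
    _ = exp (t • (a + b)) := (h_halves (a + b)).symm

end NormedSpace

/-- If the sequential splitting of the operator semigroups generated by bounded linear
operators `A` and `B` on a real Banach space is exact, i.e.
`exp(τA) ∘ exp(τB) = exp(τ(A+B))` for every `τ ∈ ℝ`, then the Marchuk–Strang splitting is
exact as well: `exp((τ/2)A) ∘ exp(τB) ∘ exp((τ/2)A) = exp(τ(A+B))` for every `τ ∈ ℝ`. -/
theorem strang_splitting_exact_of_seq_exact
    {X : Type*} [NormedAddCommGroup X] [NormedSpace ℝ X] [CompleteSpace X]
    (A B : X →L[ℝ] X)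
    (h : ∀ τ : ℝ,
      NormedSpace.exp (τ • A) ∘L NormedSpace.exp (τ • B) =
        NormedSpace.exp (τ • (A + B))) :
    ∀ τ : ℝ,
      NormedSpace.exp ((τ / 2) • A) ∘L NormedSpace.exp (τ • B) ∘L
          NormedSpace.exp ((τ / 2) • A) =
        NormedSpace.exp (τ • (A + B)) :=
  exp_half_smul_mul_exp_smul_mul_exp_half_smul h
end
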